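/- The dynamic-programming value at the initial belief equals the optimal cost of the coordinator's problem: V₁(π₁) = min over all coordination strategies d of 𝒥(d), and the greedy coordination strategy that at each time applies a minimizing prescription Ξ_t(Π_t) to the current belief Π_t (updated via η) attains this minimum. -/

import Mathlib

open Finset

noncomputable section

/-- Likelihood `ℓ(γ,m,u) = ∏_i γ(m^i)^{u^i} (1-γ(m^i))^{1-u^i}`. -/
def ell {n : ℕ} {M : Type} (γ : M → ℝ) (m : Fin n → M) (u : Fin n → Bool) : ℝ :=
  ∏ i : Fin n, if u i then γ (m i) else 1 - γ (m i)

/-- `P(u|π,γ) = Σ_m π(m) ℓ(γ,m,u)`. -/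
def Pout {n : ℕ} {M : Type} [Fintype M]
    (π : (Fin n → M) → ℝ) (γ : M → ℝ) (u : Fin n → Bool) : ℝ :=
  ∑ m : Fin n → M, π m * ell γ m u

open Classical in
/-- Updated belief `η(π,γ,u)(m) = π(m) ℓ(γ,m,u)/P(u|π,γ)` when `P(u|π,γ) ≠ 0`
(and `η(π,γ,u) = π` when `P(u|π,γ) = 0`, an arbitrary convention). -/
def etaUpd {n : ℕ} {M : Type} [Fintype M]
    (π : (Fin n → M) → ℝ) (γ : M → ℝ) (u : Fin n → Bool) : (Fin n → M) → ℝ :=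
  fun m => if Pout π γ u = 0 then π m else π m * ell γ m u / Pout π γ u

/-- One step of the dynamic-programming recursion: the expected current cost plus the
expected cost-to-go `W` at the updated belief,
`Σ_m Σ_u π(m) ℓ(γ,m,u) k(m,u) + Σ_u P(u|π,γ) W(η(π,γ,u))`
(any term with `P(u|π,γ) = 0` vanishes). -/
def stepVal {n : ℕ} {M : Type} [Fintype M]
    (k : (Fin n → M) → (Fin n → Bool) → ℝ)
    (W : ((Fin n → M) → ℝ) → ℝ)
    (π : (Fin n → M) → ℝ) (γ : M → ℝ) : ℝ :=
  (∑ m : Fin n → M, ∑ u : Fin n → Bool, π m * ell γ m u * k m u) +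
    ∑ u : Fin n → Bool, Pout π γ u * W (etaUpd π γ u)

/-- The set of prescriptions: maps `γ : M → [0,1]`. -/
def prescriptions (M : Type) : Set (M → ℝ) :=
  {γ | ∀ a, γ a ∈ Set.Icc (0 : ℝ) 1}

/-- The simplex of probability distributions on `𝓜^n`. -/
def simplex (n : ℕ) (M : Type) [Fintype M] : Set ((Fin n → M) → ℝ) :=
  {π | (∀ m, 0 ≤ π m) ∧ ∑ m : Fin n → M, π m = 1}

/-- The prefix `u_{1:t-1}` of a full action sequence, at time `t`. -/
def pre {n T : ℕ} (u : Fin T → Fin n → Bool) (t : Fin T) : Fin t.1 → Fin n → Bool :=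
  fun s => u ⟨s.1, s.2.trans t.2⟩

/-- Expected total cost `𝒥(d)` of a coordination strategy `d`. -/
def Jcoord {n T : ℕ} {M : Type} [Fintype M]
    (π₁ : (Fin n → M) → ℝ)
    (k : Fin T → (Fin n → M) → (Fin n → Bool) → ℝ)
    (d : ∀ t : Fin T, (Fin t.1 → Fin n → Bool) → M → ℝ) : ℝ :=
  ∑ m : Fin n → M, π₁ m *
    ∑ u : Fin T → Fin n → Bool,
      (∏ t : Fin T, ell (d t (pre u t)) m (u t)) * (∑ t : Fin T, k t m (u t))

/-! Conditioning on the first joint action, Bayes' rule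
`P(u|π,γ) η(π,γ,u)(m) = π(m) ℓ(γ,m,u)` shows that the expected cost of any coordination
strategy satisfies the same one-step recursion as the value functions, with the continuation
strategy run from the updated belief. Induction on the horizon then gives `V₁(π₁) ≤ 𝒥(d)` for
every strategy `d`, because each `V_t` is bounded below on the simplex and so the infimum in the
Bellman equation really is a lower bound; for the greedy strategy every step is an equality,
since its continuation after any action is again greedy. -/

theorem sum_fun_fin_succ {X β : Type*} [Fintype X] [AddCommMonoid β] {T : ℕ}
    (f : (Fin (T + 1) → X) → β) :
    ∑ u, f u = ∑ a : X, ∑ v : Fin T → X, f (Fin.cons a v) := by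
  rw [← (Fin.consEquiv fun _ => X).sum_comp, Fintype.sum_prod_type]
  rfl

theorem init_cons_eq_cons_init {X : Type} {t : ℕ} (a : X) (c : Fin (t + 1) → X) :
    Fin.init (Fin.cons a c : Fin (t + 2) → X) = Fin.cons a (Fin.init c) := by
  funext s
  induction s using Fin.cases <;> rfl

theorem exists_forall_le_of_finite {α β : Type*} [Finite α] [Finite β] (f : α → β → ℝ) :
    ∃ K, ∀ a b, K ≤ f a b := by
  obtain ⟨K, hK⟩ := (Set.finite_range (Function.uncurry f)).bddBelow
  exact ⟨K, fun a b => hK ⟨(a, b), rfl⟩⟩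

section Beliefs

variable {n : ℕ} {M : Type}

theorem ell_nonneg {γ : M → ℝ} (hγ : γ ∈ prescriptions M) (m : Fin n → M)
    (u : Fin n → Bool) : 0 ≤ ell γ m u :=
  prod_nonneg fun i _ => by
    obtain ⟨h0, h1⟩ := hγ (m i)
    split <;> linarith

theorem sum_ell (γ : M → ℝ) (m : Fin n → M) : ∑ u : Fin n → Bool, ell γ m u = 1 := by
  unfold ell
  rw [← Fintype.prod_sum fun i (b : Bool) => if b then γ (m i) else 1 - γ (m i)]
  exact prod_eq_one fun i _ => by simp

variable [Fintype M]

theorem Pout_nonneg {π : (Fin n → M) → ℝ} (hπ : ∀ m, 0 ≤ π m) {γ : M → ℝ}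
    (hγ : γ ∈ prescriptions M) (u : Fin n → Bool) : 0 ≤ Pout π γ u :=
  sum_nonneg fun m _ => mul_nonneg (hπ m) (ell_nonneg hγ m u)

theorem sum_Pout {π : (Fin n → M) → ℝ} (hπ : π ∈ simplex n M) (γ : M → ℝ) :
    ∑ u : Fin n → Bool, Pout π γ u = 1 := by
  simp only [Pout]
  rw [sum_comm]
  simp only [← mul_sum, sum_ell, mul_one]
  exact hπ.2

theorem Pout_mul_etaUpd {π : (Fin n → M) → ℝ} (hπ : ∀ m, 0 ≤ π m) {γ : M → ℝ}
    (hγ : γ ∈ prescriptions M) (u : Fin n → Bool) (m : Fin n → M) :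
    Pout π γ u * etaUpd π γ u m = π m * ell γ m u := by
  by_cases h : Pout π γ u = 0
  · rw [h, zero_mul, eq_comm]
    exact (sum_eq_zero_iff_of_nonneg fun m _ => mul_nonneg (hπ m) (ell_nonneg hγ m u)).mp h m
      (mem_univ m)
  · simp only [etaUpd, h, if_false]
    field_simp

theorem etaUpd_nonneg {π : (Fin n → M) → ℝ} (hπ : ∀ m, 0 ≤ π m) {γ : M → ℝ}
    (hγ : γ ∈ prescriptions M) (u : Fin n → Bool) (m : Fin n → M) :
    0 ≤ etaUpd π γ u m := by
  unfold etaUpd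
  split
  · exact hπ m
  · exact div_nonneg (mul_nonneg (hπ m) (ell_nonneg hγ m u)) (Pout_nonneg hπ hγ u)

theorem etaUpd_mem_simplex {π : (Fin n → M) → ℝ} (hπ : π ∈ simplex n M) {γ : M → ℝ}
    (hγ : γ ∈ prescriptions M) (u : Fin n → Bool) : etaUpd π γ u ∈ simplex n M := by
  refine ⟨etaUpd_nonneg hπ.1 hγ u, ?_⟩
  unfold etaUpd
  split
  · exact hπ.2
  · rw [← sum_div]
    exact div_self ‹_›

end Beliefs

section Strategies

variable {n T : ℕ} {M : Type}

abbrev Strategy (n T : ℕ) (M : Type) := ∀ t : Fin T, (Fin t.1 → Fin n → Bool) → M → ℝ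

def Strategy.IsAdmissible (d : Strategy n T M) : Prop := ∀ t c, d t c ∈ prescriptions M

def Strategy.first (d : Strategy n (T + 1) M) : M → ℝ := d 0 Fin.elim0

def Strategy.tail (d : Strategy n (T + 1) M) (a : Fin n → Bool) : Strategy n T M :=
  fun t c => d t.succ (Fin.cons a c)

theorem Strategy.IsAdmissible.tail {d : Strategy n (T + 1) M} (hd : d.IsAdmissible)
    (a : Fin n → Bool) : (d.tail a).IsAdmissible :=
  fun t c => hd t.succ (Fin.cons a c)

theorem Strategy.IsAdmissible.first {d : Strategy n (T + 1) M} (hd : d.IsAdmissible) :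
    d.first ∈ prescriptions M :=
  hd 0 Fin.elim0

def trajProb (d : Strategy n T M) (m : Fin n → M) (u : Fin T → Fin n → Bool) : ℝ :=
  ∏ t, ell (d t (pre u t)) m (u t)

theorem pre_cons_succ (a : Fin n → Bool) (v : Fin T → Fin n → Bool) (t : Fin T) :
    pre (Fin.cons a v) t.succ = Fin.cons a (pre v t) := by
  funext s
  induction s using Fin.cases <;> rfl

theorem trajProb_cons (d : Strategy n (T + 1) M) (m : Fin n → M) (a : Fin n → Bool)
    (v : Fin T → Fin n → Bool) :
    trajProb d m (Fin.cons a v) = ell d.first m a * trajProb (d.tail a) m v := by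
  have hpre : pre (Fin.cons a v) 0 = Fin.elim0 := funext fun s => s.elim0
  simp only [trajProb, Fin.prod_univ_succ, Fin.cons_zero, Fin.cons_succ, pre_cons_succ, hpre]
  rfl

theorem sum_trajProb {d : Strategy n T M} (hd : d.IsAdmissible) (m : Fin n → M) :
    ∑ u, trajProb d m u = 1 := by
  induction T with
  | zero => simp [trajProb]
  | succ T ih =>
    simp only [sum_fun_fin_succ, trajProb_cons, ← mul_sum, ih (hd.tail _), mul_one]
    exact sum_ell _ m

def conditionalCost (k : Fin T → (Fin n → M) → (Fin n → Bool) → ℝ) (d : Strategy n T M)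
    (m : Fin n → M) : ℝ :=
  ∑ u, trajProb d m u * ∑ t, k t m (u t)

theorem conditionalCost_succ (k : Fin (T + 1) → (Fin n → M) → (Fin n → Bool) → ℝ)
    {d : Strategy n (T + 1) M} (hd : d.IsAdmissible) (m : Fin n → M) :
    conditionalCost k d m = ∑ a, ell d.first m a *
      (k 0 m a + conditionalCost (fun t => k t.succ) (d.tail a) m) := by
  simp only [conditionalCost, sum_fun_fin_succ, trajProb_cons, Fin.sum_univ_succ, Fin.cons_zero,
    Fin.cons_succ, mul_assoc, ← mul_sum]
  refine sum_congr rfl fun a _ => ?_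
  simp only [mul_add, sum_add_distrib, ← sum_mul, sum_trajProb (hd.tail a), one_mul]

variable [Fintype M]

theorem Jcoord_eq_sum_conditionalCost (π₁ : (Fin n → M) → ℝ)
    (k : Fin T → (Fin n → M) → (Fin n → Bool) → ℝ) (d : Strategy n T M) :
    Jcoord π₁ k d = ∑ m, π₁ m * conditionalCost k d m := rfl

theorem Jcoord_succ {π : (Fin n → M) → ℝ} (hπ : ∀ m, 0 ≤ π m)
    (k : Fin (T + 1) → (Fin n → M) → (Fin n → Bool) → ℝ)
    {d : Strategy n (T + 1) M} (hd : d.IsAdmissible) :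
    Jcoord π k d = (∑ m, ∑ u, π m * ell d.first m u * k 0 m u) +
      ∑ u, Pout π d.first u * Jcoord (etaUpd π d.first u) (fun t => k t.succ) (d.tail u) := by
  simp only [Jcoord_eq_sum_conditionalCost, conditionalCost_succ k hd, mul_sum, mul_add,
    ← mul_assoc, sum_add_distrib, Pout_mul_etaUpd hπ hd.first]
  rw [sum_comm (f := fun m u => π m * ell d.first m u * conditionalCost _ _ m)]

end Strategies

section DynamicProgramming

variable {n T : ℕ} {M : Type} [Fintype M]

structure IsDPValue (k : Fin T → (Fin n → M) → (Fin n → Bool) → ℝ)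
    (V : ℕ → ((Fin n → M) → ℝ) → ℝ) : Prop where
  terminal : ∀ π, V T π = 0
  bellman : ∀ (t : Fin T) π,
    V t.1 π = sInf ((fun γ => stepVal (k t) (V (t.1 + 1)) π γ) '' prescriptions M)

theorem IsDPValue.tail {k : Fin (T + 1) → (Fin n → M) → (Fin n → Bool) → ℝ}
    {V : ℕ → ((Fin n → M) → ℝ) → ℝ} (hV : IsDPValue k V) :
    IsDPValue (fun t => k t.succ) (fun j => V (j + 1)) :=
  ⟨hV.terminal, fun t => hV.bellman t.succ⟩

theorem IsDPValue.value_zero {k : Fin (T + 1) → (Fin n → M) → (Fin n → Bool) → ℝ}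
    {V : ℕ → ((Fin n → M) → ℝ) → ℝ} (hV : IsDPValue k V) (π : (Fin n → M) → ℝ) :
    V 0 π = sInf ((fun γ => stepVal (k 0) (V 1) π γ) '' prescriptions M) :=
  hV.bellman 0 π

theorem le_stepVal {k : (Fin n → M) → (Fin n → Bool) → ℝ} {W : ((Fin n → M) → ℝ) → ℝ}
    {K c : ℝ} (hK : ∀ m u, K ≤ k m u) (hW : ∀ π ∈ simplex n M, c ≤ W π)
    {π : (Fin n → M) → ℝ} (hπ : π ∈ simplex n M) {γ : M → ℝ} (hγ : γ ∈ prescriptions M) :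
    K + c ≤ stepVal k W π γ := by
  have hcost : K ≤ ∑ m, ∑ u, π m * ell γ m u * k m u := calc
    K = ∑ m, ∑ u, π m * ell γ m u * K := by
      simp only [← sum_mul, ← mul_sum, sum_ell, mul_one, hπ.2, one_mul]
    _ ≤ _ := by
      gcongr with m _ u _
      · exact mul_nonneg (hπ.1 m) (ell_nonneg hγ m u)
      · exact hK m u
  have hcontinuation : c ≤ ∑ u, Pout π γ u * W (etaUpd π γ u) := calc
    c = ∑ u, Pout π γ u * c := by rw [← sum_mul, sum_Pout hπ, one_mul]
    _ ≤ _ := by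
      gcongr with u _
      · exact Pout_nonneg hπ.1 hγ u
      · exact hW _ (etaUpd_mem_simplex hπ hγ u)
  exact add_le_add hcost hcontinuation

-- Without this bound the `sInf` in the Bellman equation could be the junk value `0`.
theorem IsDPValue.exists_le {k : Fin T → (Fin n → M) → (Fin n → Bool) → ℝ}
    {V : ℕ → ((Fin n → M) → ℝ) → ℝ} (hV : IsDPValue k V) :
    ∃ c, ∀ π ∈ simplex n M, c ≤ V 0 π := by
  induction T generalizing V with
  | zero => exact ⟨0, fun π _ => (hV.terminal π).ge⟩
  | succ T ih =>
    obtain ⟨c, hc⟩ := ih hV.tail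
    obtain ⟨K, hK⟩ := exists_forall_le_of_finite (k 0)
    refine ⟨K + c, fun π hπ => ?_⟩
    rw [hV.value_zero]
    exact le_csInf ⟨_, _, fun _ => ⟨le_rfl, zero_le_one⟩, rfl⟩
      (Set.forall_mem_image.2 fun γ hγ => le_stepVal hK hc hπ hγ)

theorem IsDPValue.value_le_stepVal {k : Fin (T + 1) → (Fin n → M) → (Fin n → Bool) → ℝ}
    {V : ℕ → ((Fin n → M) → ℝ) → ℝ} (hV : IsDPValue k V) {π : (Fin n → M) → ℝ}
    (hπ : π ∈ simplex n M) {γ : M → ℝ} (hγ : γ ∈ prescriptions M) :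
    V 0 π ≤ stepVal (k 0) (V 1) π γ := by
  obtain ⟨c, hc⟩ := hV.tail.exists_le
  obtain ⟨K, hK⟩ := exists_forall_le_of_finite (k 0)
  rw [hV.value_zero]
  exact csInf_le ⟨K + c, Set.forall_mem_image.2 fun γ' hγ' => le_stepVal hK hc hπ hγ'⟩
    ⟨γ, hγ, rfl⟩

theorem IsDPValue.value_le_Jcoord {k : Fin T → (Fin n → M) → (Fin n → Bool) → ℝ}
    {V : ℕ → ((Fin n → M) → ℝ) → ℝ} (hV : IsDPValue k V) {π : (Fin n → M) → ℝ}
    (hπ : π ∈ simplex n M) {d : Strategy n T M} (hd : d.IsAdmissible) :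
    V 0 π ≤ Jcoord π k d := by
  induction T generalizing V π with
  | zero => simp [Jcoord, hV.terminal]
  | succ T ih =>
    rw [Jcoord_succ hπ.1 k hd]
    calc V 0 π ≤ stepVal (k 0) (V 1) π d.first := hV.value_le_stepVal hπ hd.first
      _ ≤ _ := by
        unfold stepVal
        gcongr with u _
        · exact Pout_nonneg hπ.1 hd.first u
        · exact ih hV.tail (etaUpd_mem_simplex hπ hd.first u) (hd.tail u)

theorem Jcoord_greedy_eq_value {k : Fin T → (Fin n → M) → (Fin n → Bool) → ℝ}
    {V : ℕ → ((Fin n → M) → ℝ) → ℝ} (hVT : ∀ π, V T π = 0)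
    {Ξ : ℕ → ((Fin n → M) → ℝ) → M → ℝ} (hΞmem : ∀ t π, Ξ t π ∈ prescriptions M)
    (hΞmin : ∀ (t : Fin T) π, stepVal (k t) (V (t.1 + 1)) π (Ξ t.1 π) = V t.1 π)
    {π : (Fin n → M) → ℝ} (hπ : ∀ m, 0 ≤ π m)
    {B : (t : ℕ) → (Fin t → Fin n → Bool) → (Fin n → M) → ℝ} (hB0 : ∀ c, B 0 c = π)
    (hBs : ∀ t c, B (t + 1) c =
      etaUpd (B t (Fin.init c)) (Ξ t (B t (Fin.init c))) (c (Fin.last t))) :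
    Jcoord π k (fun t c => Ξ t.1 (B t.1 c)) = V 0 π := by
  induction T generalizing V Ξ π B with
  | zero => simp [Jcoord, hVT]
  | succ T ih =>
    set d : Strategy n (T + 1) M := fun t c => Ξ t.1 (B t.1 c)
    have hd : d.IsAdmissible := fun t c => hΞmem _ _
    have hfirst : d.first = Ξ 0 π := congrArg (Ξ 0) (hB0 Fin.elim0)
    have htail : ∀ u, Jcoord (etaUpd π (Ξ 0 π) u) (fun t => k t.succ) (d.tail u) =
        V 1 (etaUpd π (Ξ 0 π) u) := fun u =>
      ih (V := fun j => V (j + 1)) hVT (Ξ := fun j => Ξ (j + 1)) (fun _ => hΞmem _)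
        (fun t => hΞmin t.succ) (etaUpd_nonneg hπ (hΞmem 0 π) u)
        (B := fun j c => B (j + 1) (Fin.cons u c)) (fun c => by rw [hBs, hB0]; rfl)
        (fun t c => by rw [hBs, init_cons_eq_cons_init]; rfl)
    rw [Jcoord_succ hπ k hd, hfirst]
    simp only [htail]
    exact hΞmin 0 π

end DynamicProgramming

theorem dp_value_eq_optimal_coordination_cost_general
    (n T : ℕ)
    (M : Type) [Fintype M]
    (π₁ : (Fin n → M) → ℝ) (hπ₁ : π₁ ∈ simplex n M)
    (k : Fin T → (Fin n → M) → (Fin n → Bool) → ℝ)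
    (V : ℕ → ((Fin n → M) → ℝ) → ℝ)
    (hVT : ∀ π, V T π = 0)
    (hV : ∀ t : Fin T, ∀ π, V t.1 π =
      sInf ((fun γ => stepVal (k t) (V (t.1 + 1)) π γ) '' prescriptions M))
    (Ξ : ℕ → ((Fin n → M) → ℝ) → M → ℝ)
    (hΞmem : ∀ t π, Ξ t π ∈ prescriptions M)
    (hΞmin : ∀ t : Fin T, ∀ π, stepVal (k t) (V (t.1 + 1)) π (Ξ t.1 π) = V t.1 π)
    (B : (t : ℕ) → (Fin t → Fin n → Bool) → (Fin n → M) → ℝ)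
    (hB0 : ∀ c, B 0 c = π₁)
    (hBs : ∀ (t : ℕ) (c : Fin (t + 1) → Fin n → Bool),
      B (t + 1) c =
        etaUpd (B t fun s => c s.castSucc)
          (Ξ t (B t fun s => c s.castSucc)) (c (Fin.last t))) :
    IsLeast {x : ℝ | ∃ d : ∀ t : Fin T, (Fin t.1 → Fin n → Bool) → M → ℝ,
        (∀ t c a, d t c a ∈ Set.Icc (0 : ℝ) 1) ∧ x = Jcoord π₁ k d}
      (V 0 π₁) ∧
    Jcoord π₁ k (fun t c => Ξ t.1 (B t.1 c)) = V 0 π₁ := by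
  have hgreedy : Jcoord π₁ k (fun t c => Ξ t.1 (B t.1 c)) = V 0 π₁ :=
    Jcoord_greedy_eq_value hVT hΞmem hΞmin hπ₁.1 hB0 hBs
  refine ⟨⟨⟨_, fun t c => hΞmem t.1 (B t.1 c), hgreedy.symm⟩, ?_⟩, hgreedy⟩
  rintro _ ⟨d, hd, rfl⟩
  exact IsDPValue.value_le_Jcoord ⟨hVT, hV⟩ hπ₁ hd

/-- The DP value at the initial belief equals the optimal cost of the coordinator's
problem: `V₁(π₁)` is the minimum of `𝒥(d)` over all coordination strategies `d`, and
the greedy strategy that applies a minimizing prescription `Ξ_t(Π_t)` to the current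
belief `Π_t` (updated via `η`) attains this minimum.
(Times are 0-indexed; `B t c` is the belief after the history `c` of length `t`.) -/
theorem dp_value_eq_optimal_coordination_cost
    (n T : ℕ) (hn : 1 ≤ n) (hT : 1 ≤ T)
    (M : Type) [Fintype M] [Nonempty M]
    (π₁ : (Fin n → M) → ℝ) (hπ₁ : π₁ ∈ simplex n M)
    (k : Fin T → (Fin n → M) → (Fin n → Bool) → ℝ)
    (V : ℕ → ((Fin n → M) → ℝ) → ℝ)
    (hVT : ∀ π, V T π = 0)
    (hV : ∀ t : Fin T, ∀ π, V t.1 π =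
      sInf ((fun γ => stepVal (k t) (V (t.1 + 1)) π γ) '' prescriptions M))
    (Ξ : ℕ → ((Fin n → M) → ℝ) → M → ℝ)
    (hΞmem : ∀ t π, Ξ t π ∈ prescriptions M)
    (hΞmin : ∀ t : Fin T, ∀ π, stepVal (k t) (V (t.1 + 1)) π (Ξ t.1 π) = V t.1 π)
    (B : (t : ℕ) → (Fin t → Fin n → Bool) → (Fin n → M) → ℝ)
    (hB0 : ∀ c, B 0 c = π₁)
    (hBs : ∀ (t : ℕ) (c : Fin (t + 1) → Fin n → Bool),
      B (t + 1) c =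
        etaUpd (B t fun s => c s.castSucc)
          (Ξ t (B t fun s => c s.castSucc)) (c (Fin.last t))) :
    IsLeast {x : ℝ | ∃ d : ∀ t : Fin T, (Fin t.1 → Fin n → Bool) → M → ℝ,
        (∀ t c a, d t c a ∈ Set.Icc (0 : ℝ) 1) ∧ x = Jcoord π₁ k d}
      (V 0 π₁) ∧
    Jcoord π₁ k (fun t c => Ξ t.1 (B t.1 c)) = V 0 π₁ :=
  dp_value_eq_optimal_coordination_cost_general n T M π₁ hπ₁ k V hVT hV Ξ hΞmem hΞmin B hB0 hBs
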